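/- arXiv:math/0510437 — 4 statements merged into one kernel-verified Lean document; each statement's English description precedes it below -/
import Mathlib

section
/- Under the hypothesis φ(g_j) < 1 for all j, the partial connection operators ∇_{∂_{x_i}} preserve the Newton filtration: ∇_{∂_{x_i}}(N_α G) ⊂ N_α G for all i ∈ {1,...,r} and α ∈ ℚ. More precisely, ∇_{∂_{x_i}} N_α G₀ ⊂ τ(N_{α+1} G₀). -/
open scoped BigOperators
set_option maxHeartbeats 1000000
set_option synthInstance.maxHeartbeats 400000

noncomputable section

/-- Laurent polynomials `ℂ[u₁,…,uₙ,u₁⁻¹,…,uₙ⁻¹]`. -/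
abbrev LaurentK (n : ℕ) := AddMonoidAlgebra ℂ (Fin n → ℤ)
/-- The parameter ring `ℂ[x₁,…,x_r]`. -/
abbrev CoeffR (r : ℕ) := MvPolynomial (Fin r) ℂ
/-- Laurent polynomials in `u` with coefficients in `ℂ[x]`. -/
abbrev LaurentKX (n r : ℕ) := AddMonoidAlgebra (CoeffR r) (Fin n → ℤ)

/-- Newton filtration value of a Laurent polynomial, given the finite set `S` of
supporting linear forms of the Newton boundary (the parameters `x` have weight 0). -/
def newtonPhi {R : Type} [CommRing R] {n : ℕ}
    (S : Finset ((Fin n → ℤ) →+ ℚ)) (g : AddMonoidAlgebra R (Fin n → ℤ)) : WithBot ℚ :=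
  g.coeff.support.sup fun a => S.sup fun L => ((L a : ℚ) : WithBot ℚ)

/-- The logarithmic derivative `u_i ∂/∂u_i`. -/
def thetaDeriv {R : Type} [CommRing R] {n : ℕ} (i : Fin n)
    (g : AddMonoidAlgebra R (Fin n → ℤ)) : AddMonoidAlgebra R (Fin n → ℤ) :=
  Finsupp.sum g.coeff fun a c => (AddMonoidAlgebra.single a ((a i) • c) : AddMonoidAlgebra R (Fin n → ℤ))

def inclK {n r : ℕ} (g : LaurentK n) : LaurentKX n r :=
  AddMonoidAlgebra.ofCoeff (Finsupp.mapRange (algebraMap ℂ (CoeffR r)) (map_zero _) g.coeff)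

/-- `F(u,x) = f(u) + ∑ x_j g_j(u)`. -/
def defF {n r : ℕ} (f : LaurentK n) (g : Fin r → LaurentK n) : LaurentKX n r :=
  inclK f + ∑ j, (AddMonoidAlgebra.single 0 (MvPolynomial.X j) : LaurentKX n r) * inclK (g j)

def evalT {n : ℕ} (u : Fin n → ℂˣ) (g : LaurentK n) : ℂ :=
  Finsupp.sum g.coeff fun a c => c * ∏ i, ((u i : ℂ) ^ (a i))

open Classical in
/-- Face part of `f` associated to a linear form `ℓ`. -/
def facePart {n : ℕ} (f : LaurentK n) (ℓ : (Fin n → ℤ) →+ ℚ) : LaurentK n :=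
  AddMonoidAlgebra.ofCoeff (Finsupp.filter (fun a => ∀ b ∈ f.coeff.support, ℓ b ≤ ℓ a) f.coeff)

/-- Kouchnirenko nondegeneracy w.r.t. the Newton polyhedron at infinity. -/
def Nondegenerate {n : ℕ} (f : LaurentK n) : Prop :=
  ∀ ℓ : (Fin n → ℤ) →+ ℚ, ℓ ≠ 0 → ∀ u : Fin n → ℂˣ,
    ∃ i, evalT u (thetaDeriv i (facePart f ℓ)) ≠ 0

def expR {n : ℕ} (a : Fin n → ℤ) : Fin n → ℝ := fun i => (a i : ℝ)

/-- `f` is convenient ("commode"): the origin lies in the interior of its Newton polyhedron. -/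
def Convenient {n : ℕ} (f : LaurentK n) : Prop :=
  (0 : Fin n → ℝ) ∈ interior (convexHull ℝ (expR '' (f.coeff.support : Set (Fin n → ℤ))))

def jacobianIdeal {n : ℕ} (f : LaurentK n) : Ideal (LaurentK n) :=
  Ideal.span (Set.range fun i => thetaDeriv i f)

/-- The global Milnor number `μ = dim_ℂ Ωⁿ(U)/df∧Ω^{n-1}(U)`. -/
def milnor {n : ℕ} (f : LaurentK n) : ℕ :=
  Module.finrank ℂ (LaurentK n ⧸ jacobianIdeal f)

/-- `S` consists of the supporting linear forms of the Newton polyhedron of `f`: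
the sublevel set `{φ ≤ 1}` is exactly the Newton polyhedron. -/
def SCompatible {n : ℕ} (S : Finset ((Fin n → ℤ) →+ ℚ)) (f : LaurentK n) : Prop :=
  ∀ g : LaurentK n, newtonPhi S g ≤ (1 : ℚ) ↔
    ∀ a ∈ g.coeff.support, expR a ∈ convexHull ℝ (expR '' (f.coeff.support : Set (Fin n → ℤ)))

/-- The ambient module `Ωⁿ(U)[x,θ,θ⁻¹]` for the Gauss–Manin system: an `n`-form is
identified with its coefficient on `du/u`, the exponent `(a, m)` stands for `u^a θ^m`
(`θ^m = τ^{-m}`). -/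
abbrev Amb (n r : ℕ) := AddMonoidAlgebra (CoeffR r) ((Fin n → ℤ) × ℤ)

/-- `ω θ^m` as element of the ambient module. -/
def emb {n r : ℕ} (w : LaurentKX n r) (m : ℤ) : Amb n r :=
  Finsupp.sum w.coeff fun a c => (AddMonoidAlgebra.single (a, m) c : Amb n r)

/-- `u_i ∂/∂u_i` on the ambient module. -/
def thetaDerivA {n r : ℕ} (i : Fin n) (v : Amb n r) : Amb n r :=
  Finsupp.sum v.coeff fun p c => (AddMonoidAlgebra.single p ((p.1 i) • c) : Amb n r)

/-- Generators of `(θ d_u − d_u F ∧) Ω^{n-1}(U)[x,θ,θ⁻¹]`. -/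
def relSet {n r : ℕ} (f : LaurentK n) (g : Fin r → LaurentK n) : Set (Amb n r) :=
  ⋃ i : Fin n, Set.range fun η : Amb n r =>
    (AddMonoidAlgebra.single ((0 : Fin n → ℤ), (1 : ℤ)) (1 : CoeffR r) : Amb n r)
        * thetaDerivA i η
      - emb (thetaDeriv i (defF f g)) 0 * η

def relSub {n r : ℕ} (f : LaurentK n) (g : Fin r → LaurentK n) :
    Submodule (CoeffR r) (Amb n r) :=
  Submodule.span (CoeffR r) (relSet f g)

/-- Newton weight on the ambient module: `u^a θ^m` has weight `φ(u^a) + m`. -/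
def ambWeight {n r : ℕ} (S : Finset ((Fin n → ℤ) →+ ℚ)) (v : Amb n r) : WithBot ℚ :=
  v.coeff.support.sup fun p => (S.sup fun L => ((L p.1 : ℚ) : WithBot ℚ)) + ((p.2 : ℚ) : WithBot ℚ)

/-- Representatives of the Brieskorn lattice `G₀ = Ωⁿ(U)[x,θ]`: only nonnegative
powers of `θ`. -/
def polySet (n r : ℕ) : Set (Amb n r) := {v | ∀ p ∈ v.coeff.support, (0:ℤ) ≤ Prod.snd p}

/-- The Newton filtration `N_α G` of the Gauss–Manin system. -/
def NG {n r : ℕ} (f : LaurentK n) (g : Fin r → LaurentK n)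
    (S : Finset ((Fin n → ℤ) →+ ℚ)) (α : ℚ) :
    Submodule (CoeffR r) (Amb n r ⧸ relSub f g) :=
  Submodule.span (CoeffR r) ((relSub f g).mkQ '' {v | ambWeight S v ≤ (α : WithBot ℚ)})

/-- The Newton filtration `N_α G₀` of the Brieskorn lattice. -/
def NG0 {n r : ℕ} (f : LaurentK n) (g : Fin r → LaurentK n)
    (S : Finset ((Fin n → ℤ) →+ ℚ)) (α : ℚ) :
    Submodule (CoeffR r) (Amb n r ⧸ relSub f g) :=
  Submodule.span (CoeffR r)
    ((relSub f g).mkQ '' ({v | ambWeight S v ≤ (α : WithBot ℚ)} ∩ polySet n r))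

/-- The Brieskorn lattice `G₀` inside the Gauss–Manin system `G`. -/
def G0sub {n r : ℕ} (f : LaurentK n) (g : Fin r → LaurentK n) :
    Submodule (CoeffR r) (Amb n r ⧸ relSub f g) :=
  Submodule.span (CoeffR r) ((relSub f g).mkQ '' polySet n r)

/-- `N_{<α} G`. -/
def NGlt {n r : ℕ} (f : LaurentK n) (g : Fin r → LaurentK n)
    (S : Finset ((Fin n → ℤ) →+ ℚ)) (α : ℚ) :
    Submodule (CoeffR r) (Amb n r ⧸ relSub f g) :=
  ⨆ β ∈ {β : ℚ | β < α}, NG f g S β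

/-- The Gauss–Manin connection `∇_{∂_{x_i}}`:
`∇(ω τ^p) = ∂_{x_i}(ω) τ^p − g_i ω τ^{p+1}`. -/
def pderivA {n r : ℕ} (i : Fin r) (v : Amb n r) : Amb n r :=
  AddMonoidAlgebra.ofCoeff (Finsupp.mapRange (MvPolynomial.pderiv i) (map_zero _) v.coeff)

def nablaX {n r : ℕ} (g : Fin r → LaurentK n) (i : Fin r) (v : Amb n r) : Amb n r :=
  pderivA i v - emb (inclK (g i)) (-1) * v

/-- `τ∇_{∂_τ}` : `τ∇_{∂_τ}(ωτ^p) = −Fωτ^{p+1} + pωτ^p`. -/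
def tauDtau {n r : ℕ} (f : LaurentK n) (g : Fin r → LaurentK n) (v : Amb n r) : Amb n r :=
  -(emb (defF f g) (-1) * v)
    + Finsupp.sum v.coeff fun p c => (AddMonoidAlgebra.single p ((-p.2) • c) : Amb n r)

/-- `∇_{∂_τ}(ωτ^p) = −Fωτ^p + pωτ^{p-1}`. -/
def dTau {n r : ℕ} (f : LaurentK n) (g : Fin r → LaurentK n) (v : Amb n r) : Amb n r :=
  -(emb (defF f g) 0 * v)
    + Finsupp.sum v.coeff fun p c => (AddMonoidAlgebra.single (p.1, p.2 + 1) ((-p.2) • c) : Amb n r)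

/-- Multiplication by `τ`. -/
def tauMul {n r : ℕ} (v : Amb n r) : Amb n r :=
  (AddMonoidAlgebra.single ((0 : Fin n → ℤ), (-1 : ℤ)) (1 : CoeffR r) : Amb n r) * v

/-- Multiplication by `θ`. -/
def thetaMul {n r : ℕ} (v : Amb n r) : Amb n r :=
  (AddMonoidAlgebra.single ((0 : Fin n → ℤ), (1 : ℤ)) (1 : CoeffR r) : Amb n r) * v

/-- `θ²∇_{∂_θ} = −θ · (τ∇_{∂_τ})`. -/
def thetaSqDtheta {n r : ℕ} (f : LaurentK n) (g : Fin r → LaurentK n) (v : Amb n r) :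
    Amb n r :=
  -(thetaMul (tauDtau f g v))

/-- Embedding of `ℂ[x,θ]` in the ambient module. -/
def embedP {n r : ℕ} (p : AddMonoidAlgebra (CoeffR r) ℕ) : Amb n r :=
  Finsupp.sum p.coeff fun m a =>
    (AddMonoidAlgebra.single ((0 : Fin n → ℤ), (m : ℤ)) a : Amb n r)

/-- Embedding of `ℂ[x,τ]` in the ambient module (`τ = θ⁻¹`). -/
def embedPtau {n r : ℕ} (p : AddMonoidAlgebra (CoeffR r) ℕ) : Amb n r :=
  Finsupp.sum p.coeff fun m a =>
    (AddMonoidAlgebra.single ((0 : Fin n → ℤ), -(m : ℤ)) a : Amb n r)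

/-!
Write `∇_{∂_{x_i}} = τ · (θ∂_{x_i} − g_i)`. The Newton weight of `u^a θ^m` is subadditive, so
the weight of a product is at most the sum of the weights; `∂_{x_i}` acts on coefficients only,
multiplication by `θ` adds `1` and multiplication by `g_i` adds at most `φ(g_i) ≤ 1`. Hence
`θ∇_{∂_{x_i}}` raises the weight by at most `1` and keeps `θ`-exponents nonnegative, and `τ`
lowers the weight by `1`.
-/

section NewtonWeight

open AddMonoidAlgebra

variable {n r : ℕ}

/-- `ambWeight S` is definitionally `supDegree (monomialWeight S)`. -/
def monomialWeight (S : Finset ((Fin n → ℤ) →+ ℚ)) (p : (Fin n → ℤ) × ℤ) : WithBot ℚ :=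
  (S.sup fun L => ((L p.1 : ℚ) : WithBot ℚ)) + ((p.2 : ℚ) : WithBot ℚ)

theorem monomialWeight_add_le (S : Finset ((Fin n → ℤ) →+ ℚ)) (p q : (Fin n → ℤ) × ℤ) :
    monomialWeight S (p + q) ≤ monomialWeight S p + monomialWeight S q := by
  have hsup : (S.sup fun L => ((L (p + q).1 : ℚ) : WithBot ℚ)) ≤
      (S.sup fun L => ((L p.1 : ℚ) : WithBot ℚ)) + S.sup fun L => ((L q.1 : ℚ) : WithBot ℚ) :=
    Finset.sup_le fun L hL => by
      rw [Prod.fst_add, map_add, WithBot.coe_add]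
      exact add_le_add (Finset.le_sup (f := fun L => ((L p.1 : ℚ) : WithBot ℚ)) hL)
        (Finset.le_sup (f := fun L => ((L q.1 : ℚ) : WithBot ℚ)) hL)
  unfold monomialWeight
  rw [Prod.snd_add, Int.cast_add, WithBot.coe_add, add_add_add_comm]
  exact add_le_add_left hsup _

theorem monomialWeight_zero_le (S : Finset ((Fin n → ℤ) →+ ℚ)) (m : ℤ) :
    monomialWeight S ((0 : Fin n → ℤ), m) ≤ ((m : ℚ) : WithBot ℚ) := by
  have h : (S.sup fun L => ((L (0 : Fin n → ℤ) : ℚ) : WithBot ℚ)) ≤ 0 :=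
    Finset.sup_le fun L _ => by rw [map_zero]; rfl
  simpa [monomialWeight] using add_le_add_left h ((m : ℚ) : WithBot ℚ)

theorem ambWeight_mul_le (S : Finset ((Fin n → ℤ) →+ ℚ)) (x y : Amb n r) :
    ambWeight S (x * y) ≤ ambWeight S x + ambWeight S y :=
  sup_support_coeff_mul_le (monomialWeight_add_le S) x y

theorem ambWeight_sub_le (S : Finset ((Fin n → ℤ) →+ ℚ)) (x y : Amb n r) :
    ambWeight S (x - y) ≤ ambWeight S x ⊔ ambWeight S y :=
  supDegree_sub_le

theorem ambWeight_single_zero_le (S : Finset ((Fin n → ℤ) →+ ℚ)) (m : ℤ) (c : CoeffR r) :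
    ambWeight S (single ((0 : Fin n → ℤ), m) c : Amb n r) ≤ ((m : ℚ) : WithBot ℚ) :=
  Finset.sup_le fun p hp => by
    rw [Finset.mem_singleton.1 (Finsupp.support_single_subset hp)]
    exact monomialWeight_zero_le S m

theorem ambWeight_pderivA_le (S : Finset ((Fin n → ℤ) →+ ℚ)) (i : Fin r) (v : Amb n r) :
    ambWeight S (pderivA i v) ≤ ambWeight S v :=
  Finset.sup_mono (Finsupp.support_mapRange (hf := map_zero _))

theorem mem_support_emb {w : LaurentKX n r} {m : ℤ} {p : (Fin n → ℤ) × ℤ}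
    (hp : p ∈ (emb w m).coeff.support) : ∃ a ∈ w.coeff.support, p = (a, m) := by
  classical
  unfold emb at hp
  rw [coeff_finsuppSum] at hp
  obtain ⟨a, ha, hpa⟩ := Finset.mem_biUnion.1 (Finsupp.support_sum hp)
  exact ⟨a, ha, Finset.mem_singleton.1 (Finsupp.support_single_subset hpa)⟩

theorem ambWeight_emb_le (S : Finset ((Fin n → ℤ) →+ ℚ)) (w : LaurentKX n r) (m : ℤ) :
    ambWeight S (emb w m) ≤ newtonPhi S w + ((m : ℚ) : WithBot ℚ) :=
  Finset.sup_le fun p hp => by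
    obtain ⟨a, ha, rfl⟩ := mem_support_emb hp
    exact add_le_add_left (Finset.le_sup (f := fun a => S.sup fun L => ((L a : ℚ) : WithBot ℚ)) ha) _

theorem newtonPhi_inclK_le (S : Finset ((Fin n → ℤ) →+ ℚ)) (w : LaurentK n) :
    newtonPhi S (inclK (r := r) w) ≤ newtonPhi S w :=
  Finset.sup_mono (Finsupp.support_mapRange (hf := map_zero _))

theorem mul_mem_polySet {x y : Amb n r} (hx : x ∈ polySet n r) (hy : y ∈ polySet n r) :
    x * y ∈ polySet n r := by
  classical
  intro p hp
  obtain ⟨q, hq, s, hs, rfl⟩ := Finset.mem_add.1 (support_coeff_mul_subset x y hp)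
  exact add_nonneg (hx q hq) (hy s hs)

theorem sub_mem_polySet {x y : Amb n r} (hx : x ∈ polySet n r) (hy : y ∈ polySet n r) :
    x - y ∈ polySet n r := by
  classical
  intro p hp
  rw [coeff_sub] at hp
  rcases Finset.mem_union.1 (Finsupp.support_sub hp) with h | h
  exacts [hx p h, hy p h]

theorem single_mem_polySet {p : (Fin n → ℤ) × ℤ} (hp : 0 ≤ p.2) (c : CoeffR r) :
    (single p c : Amb n r) ∈ polySet n r := fun q hq => by
  rwa [Finset.mem_singleton.1 (Finsupp.support_single_subset hq)]

theorem emb_mem_polySet (w : LaurentKX n r) {m : ℤ} (hm : 0 ≤ m) : emb w m ∈ polySet n r :=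
  fun p hp => by
    obtain ⟨a, -, rfl⟩ := mem_support_emb hp
    exact hm

theorem pderivA_mem_polySet (i : Fin r) {v : Amb n r} (hv : v ∈ polySet n r) :
    pderivA i v ∈ polySet n r :=
  fun p hp => hv p (Finsupp.support_mapRange (hf := map_zero _) hp)

/-- `θ ∇_{∂_{x_i}} = θ ∂_{x_i} − g_i`. -/
def thetaNablaX (g : Fin r → LaurentK n) (i : Fin r) (v : Amb n r) : Amb n r :=
  thetaMul (pderivA i v) - emb (inclK (g i)) 0 * v

theorem single_mul_emb (w : LaurentKX n r) (k m : ℤ) :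
    (single ((0 : Fin n → ℤ), k) (1 : CoeffR r) : Amb n r) * emb w m = emb w (k + m) := by
  classical
  unfold emb
  rw [Finsupp.mul_sum]
  refine Finsupp.sum_congr fun a _ => ?_
  rw [single_mul_single, one_mul, Prod.mk_add_mk, zero_add]

theorem tauMul_thetaMul (x : Amb n r) : tauMul (thetaMul x) = x := by
  unfold tauMul thetaMul
  rw [← mul_assoc, single_mul_single, one_mul, Prod.mk_add_mk, add_zero, neg_add_cancel,
    Prod.mk_zero_zero, ← one_def, one_mul]

theorem tauMul_thetaNablaX (g : Fin r → LaurentK n) (i : Fin r) (v : Amb n r) :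
    tauMul (thetaNablaX g i v) = nablaX g i v := by
  unfold thetaNablaX nablaX
  rw [tauMul, mul_sub, ← tauMul, tauMul_thetaMul, ← mul_assoc, single_mul_emb, add_zero]

theorem ambWeight_tauMul_le (S : Finset ((Fin n → ℤ) →+ ℚ)) (v : Amb n r) :
    ambWeight S (tauMul v) ≤ ((-1 : ℚ) : WithBot ℚ) + ambWeight S v := by
  have h := ambWeight_single_zero_le (r := r) S (-1) 1
  push_cast at h
  exact (ambWeight_mul_le S _ v).trans (add_le_add_left h _)

theorem ambWeight_thetaNablaX_le {S : Finset ((Fin n → ℤ) →+ ℚ)} {g : Fin r → LaurentK n}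
    {i : Fin r} (hg : newtonPhi S (g i) ≤ ((1 : ℚ) : WithBot ℚ)) {v : Amb n r} {α : ℚ}
    (hv : ambWeight S v ≤ (α : WithBot ℚ)) :
    ambWeight S (thetaNablaX g i v) ≤ ((α + 1 : ℚ) : WithBot ℚ) := by
  have hθ : ambWeight S (thetaMul (pderivA i v)) ≤ ((α + 1 : ℚ) : WithBot ℚ) := by
    have h := ambWeight_single_zero_le (r := r) S 1 1
    calc ambWeight S (thetaMul (pderivA i v))
        ≤ ((1 : ℚ) : WithBot ℚ) + α :=
          (ambWeight_mul_le S _ _).trans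
            (add_le_add (by exact_mod_cast h) ((ambWeight_pderivA_le S i v).trans hv))
      _ = ((α + 1 : ℚ) : WithBot ℚ) := by rw [← WithBot.coe_add, add_comm]
  have hgv : ambWeight S (emb (inclK (g i)) 0 * v) ≤ ((α + 1 : ℚ) : WithBot ℚ) := by
    calc ambWeight S (emb (inclK (g i)) 0 * v)
        ≤ (newtonPhi S (g i) + ((0 : ℤ) : ℚ)) + α :=
          (ambWeight_mul_le S _ _).trans (add_le_add
            ((ambWeight_emb_le S _ 0).trans (add_le_add_left (newtonPhi_inclK_le S _) _)) hv)
      _ ≤ ((1 : ℚ) : WithBot ℚ) + ((0 : ℤ) : ℚ) + α := by gcongr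
      _ = ((α + 1 : ℚ) : WithBot ℚ) := by
          rw [Int.cast_zero, WithBot.coe_zero, add_zero, ← WithBot.coe_add, add_comm]
  exact (ambWeight_sub_le S _ _).trans (sup_le hθ hgv)

theorem ambWeight_nablaX_le {S : Finset ((Fin n → ℤ) →+ ℚ)} {g : Fin r → LaurentK n}
    {i : Fin r} (hg : newtonPhi S (g i) ≤ ((1 : ℚ) : WithBot ℚ)) {v : Amb n r} {α : ℚ}
    (hv : ambWeight S v ≤ (α : WithBot ℚ)) :
    ambWeight S (nablaX g i v) ≤ (α : WithBot ℚ) := by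
  rw [← tauMul_thetaNablaX]
  calc ambWeight S (tauMul (thetaNablaX g i v))
      ≤ ((-1 : ℚ) : WithBot ℚ) + ((α + 1 : ℚ) : WithBot ℚ) :=
        (ambWeight_tauMul_le S _).trans (add_le_add_right (ambWeight_thetaNablaX_le hg hv) _)
    _ = (α : WithBot ℚ) := by rw [← WithBot.coe_add, neg_add_cancel_comm_assoc]

theorem thetaNablaX_mem_polySet (g : Fin r → LaurentK n) (i : Fin r) {v : Amb n r}
    (hv : v ∈ polySet n r) : thetaNablaX g i v ∈ polySet n r :=
  sub_mem_polySet (mul_mem_polySet (single_mem_polySet zero_le_one 1) (pderivA_mem_polySet i hv))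
    (mul_mem_polySet (emb_mem_polySet _ le_rfl) hv)

end NewtonWeight

theorem nabla_preserves_newton_filtration_general {n r : ℕ}
    (S : Finset ((Fin n → ℤ) →+ ℚ))
    (f : LaurentK n) (g : Fin r → LaurentK n)
    (hg : ∀ j, newtonPhi S (g j) < ((1 : ℚ) : WithBot ℚ)) :
    (∀ (i : Fin r) (α : ℚ) (v : Amb n r), ambWeight S v ≤ (α : WithBot ℚ) →
      (relSub f g).mkQ (nablaX g i v) ∈ NG f g S α) ∧
    (∀ (i : Fin r) (α : ℚ) (v : Amb n r),
      v ∈ {w | ambWeight S w ≤ (α : WithBot ℚ)} ∩ polySet n r →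
      (relSub f g).mkQ (nablaX g i v) ∈
        Submodule.span (CoeffR r) ((relSub f g).mkQ ''
          (tauMul '' ({w | ambWeight S w ≤ ((α + 1 : ℚ) : WithBot ℚ)} ∩ polySet n r)))) := by
  refine ⟨fun i α v hv => ?_, fun i α v ⟨hv, hvG₀⟩ => ?_⟩
  · exact Submodule.subset_span ⟨_, ambWeight_nablaX_le (hg i).le hv, rfl⟩
  · rw [← tauMul_thetaNablaX]
    exact Submodule.subset_span ⟨_, ⟨_, ⟨ambWeight_thetaNablaX_le (hg i).le hv,
      thetaNablaX_mem_polySet g i hvG₀⟩, rfl⟩, rfl⟩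

/-- under the hypothesis `φ(g_j) < 1` for all `j`, the operators
`∇_{∂_{x_i}}` preserve the Newton filtration: `∇_{∂_{x_i}}(N_α G) ⊂ N_α G` for all `i, α`;
more precisely, `∇_{∂_{x_i}} N_α G₀ ⊂ τ(N_{α+1} G₀)`.  (Statements are phrased on
representatives in the ambient module, `mkQ` being the projection onto `G`.) -/
theorem nabla_preserves_newton_filtration {n r : ℕ}
    (S : Finset ((Fin n → ℤ) →+ ℚ)) (hS : S.Nonempty)
    (f : LaurentK n) (g : Fin r → LaurentK n)
    (hSf : SCompatible S f) (hconv : Convenient f) (hnd : Nondegenerate f)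
    (hg : ∀ j, newtonPhi S (g j) < ((1 : ℚ) : WithBot ℚ)) :
    (∀ (i : Fin r) (α : ℚ) (v : Amb n r), ambWeight S v ≤ (α : WithBot ℚ) →
      (relSub f g).mkQ (nablaX g i v) ∈ NG f g S α) ∧
    (∀ (i : Fin r) (α : ℚ) (v : Amb n r),
      v ∈ {w | ambWeight S w ≤ (α : WithBot ℚ)} ∩ polySet n r →
      (relSub f g).mkQ (nablaX g i v) ∈
        Submodule.span (CoeffR r) ((relSub f g).mkQ ''
          (tauMul '' ({w | ambWeight S w ≤ ((α + 1 : ℚ) : WithBot ℚ)} ∩ polySet n r)))) :=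
  nabla_preserves_newton_filtration_general S f g hg

end
end

section
/- Suppose matrices C^{(1)}(x),...,C^{(r)}(x) with entries polynomial in x satisfy the integrability relations ∂_{x_i}C^{(j)} − ∂_{x_j}C^{(i)} = [C^{(j)}, C^{(i)}] for all i,j, and are nilpotent upper-triangular. Then there exists a unique matrix P with polynomial entries such that P|_{x=0} = Id and ∂_{x_i}P = −C^{(i)}(x)P for all i, and P is invertible with P^{-1} also having polynomial entries. -/
open scoped BigOperators

noncomputable section

/-- Evaluation at `x = 0` of a matrix with polynomial entries. -/
def evalZero {μ r : ℕ} (P : Matrix (Fin μ) (Fin μ) (CoeffR r)) : Matrix (Fin μ) (Fin μ) ℂ :=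
  P.map (MvPolynomial.eval (fun _ => (0 : ℂ)))

/-- Entrywise partial derivative `∂_{x_i}` of a matrix with polynomial entries. -/
def dMat {μ r : ℕ} (i : Fin r) (P : Matrix (Fin μ) (Fin μ) (CoeffR r)) :
    Matrix (Fin μ) (Fin μ) (CoeffR r) :=
  P.map (fun p => MvPolynomial.pderiv i p)

/-!
Since the `Cᵢ` are strictly upper triangular, row `k` of `∂ᵢP = -CᵢP` involves only the rows
`m > k` of `P`. Once those rows solve the system, the zero-curvature relations make the
polynomial 1-form `i ↦ -(CᵢP)ₖₗ` closed, and over a field of characteristic zero a closed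
polynomial 1-form is exact (Poincaré lemma via the radial homotopy operator). So `P` is built
row by row from the bottom, with `P(0) = 1`; it is unitriangular, hence invertible. If `Q` is
another solution, `P⁻¹Q` has vanishing derivatives, so it is the constant `P⁻¹Q(0) = 1`.
-/

namespace MvPolynomial

section Euler
variable {σ R : Type*} [CommSemiring R]

theorem coeff_X_mul_pderiv (i : σ) (p : MvPolynomial σ R) (c : σ →₀ ℕ) :
    coeff c (X i * pderiv i p) = c i * coeff c p := by
  classical
  rw [coeff_X_mul', coeff_pderiv]
  by_cases hi : c i = 0
  · simp [hi]
  · have hci : 1 ≤ c i := Nat.one_le_iff_ne_zero.mpr hi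
    have hle : Finsupp.single i 1 ≤ c := Finsupp.single_le_iff.mpr hci
    rw [if_pos (Finsupp.mem_support_iff.mpr hi), tsub_add_cancel_of_le hle, Finsupp.tsub_apply,
      Finsupp.single_eq_same, ← Nat.cast_add_one, Nat.sub_add_cancel hci, mul_comm]

theorem coeff_sum_X_mul_pderiv [Fintype σ] (p : MvPolynomial σ R) (c : σ →₀ ℕ) :
    coeff c (∑ i, X i * pderiv i p) = c.degree * coeff c p := by
  simp only [coeff_sum, coeff_X_mul_pderiv, ← Finset.sum_mul, Finsupp.degree_eq_sum, Nat.cast_sum]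

end Euler

variable {σ K : Type*} [Fintype σ] [Field K]

theorem eq_C_constantCoeff_of_pderiv_eq_zero [CharZero K] {p : MvPolynomial σ K}
    (hp : ∀ i, pderiv i p = 0) : p = C (constantCoeff p) := by
  classical
  ext c
  rw [coeff_C]
  split_ifs with hc
  · rw [← hc]; rfl
  · have hdeg : (c.degree : K) ≠ 0 := by
      simpa [Finsupp.degree_eq_zero_iff] using Ne.symm hc
    have := coeff_sum_X_mul_pderiv p c
    simp only [hp, mul_zero, Finset.sum_const_zero, coeff_zero] at this
    exact (mul_eq_zero.mp this.symm).resolve_left hdeg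

/-- The homotopy operator `f ↦ ∑ᵢ xᵢ ∫₀¹ fᵢ(t x) dt` of the Poincaré lemma: on monomials the
integral divides the coefficient of `x^c` in `∑ᵢ xᵢ fᵢ` by `|c|`. -/
def potential (f : σ → MvPolynomial σ K) : MvPolynomial σ K :=
  let h := ∑ i, X i * f i
  ∑ c ∈ h.support, monomial c (coeff c h / c.degree)

theorem coeff_potential (f : σ → MvPolynomial σ K) (c : σ →₀ ℕ) :
    coeff c (potential f) = coeff c (∑ i, X i * f i) / c.degree := by
  classical
  simp only [potential, coeff_sum, coeff_monomial, Finset.sum_ite_eq', mem_support_iff]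
  split_ifs with h
  · rfl
  · rw [not_not.mp h, zero_div]

theorem potential_zero : potential (0 : σ → MvPolynomial σ K) = 0 := by
  simp [potential]

-- `degree 0 = 0`, and division by zero gives zero.
theorem constantCoeff_potential (f : σ → MvPolynomial σ K) :
    constantCoeff (potential f) = 0 := by
  rw [constantCoeff_eq, coeff_potential, map_zero, Nat.cast_zero, div_zero]

theorem pderiv_potential [CharZero K] {f : σ → MvPolynomial σ K}
    (hf : ∀ i j, pderiv i (f j) = pderiv j (f i)) (j : σ) :
    pderiv j (potential f) = f j := by
  classical
  have hderiv : pderiv j (∑ i, X i * f i) = f j + ∑ i, X i * pderiv i (f j) := by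
    simp only [map_sum, pderiv_mul, pderiv_X, hf j, Finset.sum_add_distrib]
    simp [Pi.single_apply]
  ext c
  have hc := congrArg (coeff c) hderiv
  rw [coeff_pderiv, coeff_add, coeff_sum_X_mul_pderiv] at hc
  rw [coeff_pderiv, coeff_potential, map_add, Finsupp.degree_single]
  have hne : (c.degree : K) + 1 ≠ 0 := Nat.cast_add_one_ne_zero _
  push_cast
  field_simp
  linear_combination hc

end MvPolynomial

theorem Matrix.mul_apply_eq_of_forall_lt {n α : Type*} [Fintype n] [LinearOrder n]
    [NonUnitalNonAssocSemiring α] {A B B' : Matrix n n α} {k : n}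
    (hA : ∀ m, m ≤ k → A k m = 0) (hB : ∀ m, k < m → B m = B' m) :
    (A * B) k = (A * B') k := by
  funext l
  simp only [Matrix.mul_apply]
  refine Finset.sum_congr rfl fun m _ => ?_
  rcases le_or_gt m k with hm | hm
  · rw [hA m hm, zero_mul, zero_mul]
  · rw [hB m hm]

open MvPolynomial

section GaugeEquation
variable {μ r : ℕ}

theorem dMat_mul (i : Fin r) (A B : Matrix (Fin μ) (Fin μ) (CoeffR r)) :
    dMat i (A * B) = dMat i A * B + A * dMat i B := by
  ext1 k l
  simp only [dMat, Matrix.map_apply, Matrix.add_apply, Matrix.mul_apply, map_sum, pderiv_mul,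
    Finset.sum_add_distrib, mul_comm]

theorem evalZero_mul (A B : Matrix (Fin μ) (Fin μ) (CoeffR r)) :
    evalZero (A * B) = evalZero A * evalZero B :=
  Matrix.map_mul

theorem eq_one_of_dMat_eq_zero {R : Matrix (Fin μ) (Fin μ) (CoeffR r)}
    (hd : ∀ i, dMat i R = 0) (h0 : evalZero R = 1) : R = 1 := by
  ext k l
  have hkl := eq_C_constantCoeff_of_pderiv_eq_zero fun i => congrFun (congrFun (hd i) k) l
  have h0kl := congrFun (congrFun h0 k) l
  simp only [evalZero, Matrix.map_apply, eval_zero'] at h0kl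
  rw [hkl, h0kl, Matrix.one_apply, Matrix.one_apply]
  split_ifs <;> simp

theorem eq_of_isUnit_of_dMat_eq_neg_mul (C : Fin r → Matrix (Fin μ) (Fin μ) (CoeffR r))
    {P Q : Matrix (Fin μ) (Fin μ) (CoeffR r)} (hP : IsUnit P)
    (hP0 : evalZero P = 1) (hPd : ∀ i, dMat i P = -(C i * P))
    (hQ0 : evalZero Q = 1) (hQd : ∀ i, dMat i Q = -(C i * Q)) : Q = P := by
  obtain ⟨u, rfl⟩ := hP
  obtain ⟨R, rfl⟩ : ∃ R, Q = (u : Matrix (Fin μ) (Fin μ) (CoeffR r)) * R :=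
    ⟨(↑u⁻¹ : Matrix (Fin μ) (Fin μ) (CoeffR r)) * Q, (u.mul_inv_cancel_left Q).symm⟩
  have hRd : ∀ i, dMat i R = 0 := by
    intro i
    have h := hQd i
    rw [dMat_mul, hPd, neg_mul, mul_assoc, neg_add_eq_sub, sub_eq_neg_self] at h
    exact u.mul_right_eq_zero.mp h
  have hR0 : evalZero R = 1 := by
    rwa [evalZero_mul, hP0, one_mul] at hQ0
  rw [eq_one_of_dMat_eq_zero hRd hR0, mul_one]

end GaugeEquation

section FlatGauge
variable {μ r : ℕ} (C : Fin r → Matrix (Fin μ) (Fin μ) (CoeffR r))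

theorem pderiv_mul_apply_comm
    (hint : ∀ i j : Fin r, dMat i (C j) - dMat j (C i) = C j * C i - C i * C j)
    (htri : ∀ (i : Fin r) (k l : Fin μ), l ≤ k → C i k l = 0)
    {P : Matrix (Fin μ) (Fin μ) (CoeffR r)} {k : Fin μ}
    (hrows : ∀ m, k < m → ∀ i, dMat i P m = -(C i * P) m) (i j : Fin r) (l : Fin μ) :
    pderiv j ((C i * P) k l) = pderiv i ((C j * P) k l) := by
  have hrow : ∀ a b, dMat b (C a * P) k = ((dMat b (C a) - C a * C b) * P) k := by
    intro a b
    have hlower : (C a * dMat b P) k = (C a * -(C b * P)) k :=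
      Matrix.mul_apply_eq_of_forall_lt (htri a k) fun m hm => hrows m hm b
    funext l
    rw [dMat_mul, Matrix.add_apply, congrFun hlower l, sub_mul, mul_neg, ← mul_assoc,
      sub_eq_add_neg, Matrix.add_apply]
  have hcurv : dMat j (C i) - C i * C j = dMat i (C j) - C j * C i :=
    sub_eq_sub_iff_sub_eq_sub.mp (hint j i)
  exact congrFun ((hrow i j).trans (hcurv ▸ (hrow j i).symm)) l

/-- Row `k` is `1` plus the potential of `-(Cᵢ P)ₖ`; the guard `k < m`, harmless for strictly
upper triangular `Cᵢ`, makes the recursion on rows well founded. -/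
def flatGaugeEntry (k l : Fin μ) : CoeffR r :=
  (1 : Matrix (Fin μ) (Fin μ) (CoeffR r)) k l +
    potential fun i => -∑ m, if _ : k < m then C i k m * flatGaugeEntry m l else 0
termination_by μ - k
decreasing_by omega

def flatGauge : Matrix (Fin μ) (Fin μ) (CoeffR r) :=
  Matrix.of (flatGaugeEntry C)

theorem evalZero_flatGauge : evalZero (flatGauge C) = 1 := by
  ext k l
  rw [evalZero, Matrix.map_apply, flatGauge, Matrix.of_apply, flatGaugeEntry, eval_zero',
    map_add, constantCoeff_potential, add_zero, Matrix.one_apply, Matrix.one_apply]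
  split_ifs <;> simp

variable {C}

theorem flatGauge_apply (htri : ∀ (i : Fin r) (k l : Fin μ), l ≤ k → C i k l = 0)
    (k l : Fin μ) :
    flatGauge C k l = (1 : Matrix (Fin μ) (Fin μ) (CoeffR r)) k l +
      potential fun i => -(C i * flatGauge C) k l := by
  rw [flatGauge, Matrix.of_apply, flatGaugeEntry]
  congr 3
  funext i
  rw [Matrix.mul_apply]
  refine congrArg Neg.neg (Finset.sum_congr rfl fun m _ => ?_)
  split_ifs with hkm
  · rfl
  · rw [htri i k m (not_lt.mp hkm), zero_mul]

theorem flatGauge_apply_of_le (htri : ∀ (i : Fin r) (k l : Fin μ), l ≤ k → C i k l = 0)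
    {k l : Fin μ} (hlk : l ≤ k) :
    flatGauge C k l = (1 : Matrix (Fin μ) (Fin μ) (CoeffR r)) k l := by
  induction k using WellFoundedGT.induction with
  | _ k ih =>
    have hzero : (fun i => -(C i * flatGauge C) k l) = 0 := by
      funext i
      rw [Pi.zero_apply, neg_eq_zero, Matrix.mul_apply]
      refine Finset.sum_eq_zero fun m _ => ?_
      rcases le_or_gt m k with hm | hm
      · rw [htri i k m hm, zero_mul]
      · rw [ih m hm (hlk.trans hm.le), Matrix.one_apply_ne (hlk.trans_lt hm).ne', mul_zero]
    rw [flatGauge_apply htri, hzero, potential_zero, add_zero]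

theorem isUnit_flatGauge (htri : ∀ (i : Fin r) (k l : Fin μ), l ≤ k → C i k l = 0) :
    IsUnit (flatGauge C) := by
  have htriangular : (flatGauge C).IsUpperTriangular := fun k l (hlk : l < k) => by
    rw [flatGauge_apply_of_le htri hlk.le, Matrix.one_apply_ne hlk.ne']
  rw [Matrix.isUnit_iff_isUnit_det, Matrix.det_of_isUpperTriangular htriangular]
  simp [flatGauge_apply_of_le htri le_rfl]

theorem dMat_flatGauge
    (hint : ∀ i j : Fin r, dMat i (C j) - dMat j (C i) = C j * C i - C i * C j)
    (htri : ∀ (i : Fin r) (k l : Fin μ), l ≤ k → C i k l = 0) (i : Fin r) :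
    dMat i (flatGauge C) = -(C i * flatGauge C) := by
  suffices hrows : ∀ k i, dMat i (flatGauge C) k = -(C i * flatGauge C) k by
    exact funext fun k => hrows k i
  intro k
  induction k using WellFoundedGT.induction with
  | _ k ih =>
    intro i
    funext l
    have hclosed : ∀ a b,
        pderiv a (-(C b * flatGauge C) k l) = pderiv b (-(C a * flatGauge C) k l) := by
      intro a b
      simp only [map_neg, pderiv_mul_apply_comm C hint htri ih]
    have hconst : pderiv i ((1 : Matrix (Fin μ) (Fin μ) (CoeffR r)) k l) = 0 := by
      rw [Matrix.one_apply]; split_ifs <;> simp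
    rw [dMat, Matrix.map_apply, flatGauge_apply htri, map_add, hconst, zero_add,
      pderiv_potential hclosed]
    rfl

end FlatGauge

/-- if the matrices `C^{(i)}(x)`, with entries in `ℂ[x₁,…,x_r]`, satisfy
the zero-curvature relations `∂_{x_i}C^{(j)} − ∂_{x_j}C^{(i)} = [C^{(j)}, C^{(i)}]` and are
nilpotent (strictly) upper-triangular, then there exists a unique matrix `P` with
polynomial entries such that `P|_{x=0} = Id` and `∂_{x_i}P = −C^{(i)}(x)P` for all `i`;
moreover `P` is invertible with `P⁻¹` also having polynomial entries. -/
theorem flat_gauge_exists_unique {μ r : ℕ}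
    (C : Fin r → Matrix (Fin μ) (Fin μ) (CoeffR r))
    (hint : ∀ i j : Fin r, dMat i (C j) - dMat j (C i) = C j * C i - C i * C j)
    (htri : ∀ (i : Fin r) (k l : Fin μ), l ≤ k → C i k l = 0) :
    ∃ P : Matrix (Fin μ) (Fin μ) (CoeffR r),
      (evalZero P = 1 ∧ ∀ i : Fin r, dMat i P = -(C i * P)) ∧
      IsUnit P ∧
      ∀ Q : Matrix (Fin μ) (Fin μ) (CoeffR r),
        (evalZero Q = 1 ∧ ∀ i : Fin r, dMat i Q = -(C i * Q)) → Q = P := by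
  have hP0 := evalZero_flatGauge C
  have hPd := dMat_flatGauge hint htri
  have hP := isUnit_flatGauge htri
  refine ⟨flatGauge C, ⟨hP0, hPd⟩, hP, ?_⟩
  rintro Q ⟨hQ0, hQd⟩
  exact eq_of_isUnit_of_dMat_eq_neg_mul C hP hP0 hPd hQ0 hQd

end
end

section
/- If the Laurent polynomials g₁,...,g_r are linearly independent in C[u,u^{-1}] and φ(g_j) < 1 for all j, then the classes of g₁,...,g_r in C[u,u^{-1}]/(∂_{u₁}f,...,∂_{uₙ}f) are linearly independent. -/
open scoped BigOperators
set_option maxHeartbeats 1000000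
set_option synthInstance.maxHeartbeats 400000

noncomputable section

open Submodule

section NewtonFiltration

variable {R : Type} [CommRing R] {n : ℕ} (S : Finset ((Fin n → ℤ) →+ ℚ))

theorem le_newtonPhi_of_mem_support {g : AddMonoidAlgebra R (Fin n → ℤ)} {a : Fin n → ℤ}
    (ha : a ∈ g.coeff.support) {L : (Fin n → ℤ) →+ ℚ} (hL : L ∈ S) :
    ((L a : ℚ) : WithBot ℚ) ≤ newtonPhi S g :=
  (Finset.le_sup (f := fun L => ((L a : ℚ) : WithBot ℚ)) hL).trans
    (Finset.le_sup (f := fun a => S.sup fun L => ((L a : ℚ) : WithBot ℚ)) ha)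

theorem newtonPhi_sum_smul_le {ι : Type*} (s : Finset ι) (c : ι → R)
    (g : ι → AddMonoidAlgebra R (Fin n → ℤ)) :
    newtonPhi S (∑ j ∈ s, c j • g j) ≤ s.sup fun j => newtonPhi S (g j) := by
  refine Finset.sup_le fun a ha => ?_
  have hsupp : (∑ j ∈ s, c j • g j).coeff.support ⊆ s.biUnion fun j => (g j).coeff.support := by
    rw [AddMonoidAlgebra.coeff_sum]
    exact Finsupp.support_finsetSum.trans
      (Finset.biUnion_mono fun j _ => Finsupp.support_smul)
  obtain ⟨j, hj, haj⟩ := Finset.mem_biUnion.mp (hsupp ha)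
  exact (Finset.le_sup (f := fun a => S.sup fun L => ((L a : ℚ) : WithBot ℚ)) haj).trans
    (Finset.le_sup (f := fun j => newtonPhi S (g j)) hj)

theorem eq_zero_of_newtonPhi_lt_zero (hpos : ∀ a : Fin n → ℤ, ∃ L ∈ S, (0 : ℚ) ≤ L a)
    {b : AddMonoidAlgebra R (Fin n → ℤ)} (hb : newtonPhi S b < ((0 : ℚ) : WithBot ℚ)) :
    b = 0 := by
  by_contra hne
  obtain ⟨a, ha⟩ := Finsupp.support_nonempty_iff.mpr (mt AddMonoidAlgebra.coeff_eq_zero.mp hne)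
  obtain ⟨L, hLS, hL0⟩ := hpos a
  exact (le_newtonPhi_of_mem_support S ha hLS).not_gt (hb.trans_le (WithBot.coe_le_coe.mpr hL0))

theorem newtonPhi_lt_one_of_mem_span {ι : Type*} [Fintype ι]
    {g : ι → AddMonoidAlgebra R (Fin n → ℤ)} (hg : ∀ j, newtonPhi S (g j) < ((1 : ℚ) : WithBot ℚ))
    {h : AddMonoidAlgebra R (Fin n → ℤ)}
    (hh : h ∈ span R (Set.range g)) :
    newtonPhi S h < ((1 : ℚ) : WithBot ℚ) := by
  obtain ⟨c, rfl⟩ := (mem_span_range_iff_exists_fun R).mp hh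
  exact (newtonPhi_sum_smul_le S _ c g).trans_lt
    ((Finset.sup_lt_iff (WithBot.bot_lt_coe 1)).mpr fun j _ => hg j)

end NewtonFiltration

/-- Dividing `h` by the Jacobian ideal with quotients of weight `< 0` forces the quotients,
hence `h`, to vanish. -/
theorem eq_zero_of_mem_jacobianIdeal_of_newtonPhi_lt_one {n : ℕ}
    (S : Finset ((Fin n → ℤ) →+ ℚ)) {f : LaurentK n}
    (hpos : ∀ a : Fin n → ℤ, ∃ L ∈ S, (0 : ℚ) ≤ L a)
    (hdiv : ∀ h ∈ jacobianIdeal f, ∀ β : ℚ, newtonPhi S h ≤ (β : WithBot ℚ) →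
      ∃ b : Fin n → LaurentK n, h = ∑ i, b i * thetaDeriv i f ∧
        ∀ i, newtonPhi S (b i) ≤ ((β - 1 : ℚ) : WithBot ℚ))
    {h : LaurentK n} (hmem : h ∈ jacobianIdeal f)
    (hφ : newtonPhi S h < ((1 : ℚ) : WithBot ℚ)) :
    h = 0 := by
  obtain ⟨β, hβ, hhβ⟩ : ∃ β : ℚ, β < 1 ∧ newtonPhi S h ≤ (β : WithBot ℚ) := by
    cases hcase : newtonPhi S h with
    | bot => exact ⟨0, zero_lt_one, bot_le⟩
    | coe q => exact ⟨q, WithBot.coe_lt_coe.mp (hcase ▸ hφ), le_rfl⟩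
  obtain ⟨b, rfl, hb⟩ := hdiv h hmem β hhβ
  have hb0 : ∀ i, b i = 0 := fun i =>
    eq_zero_of_newtonPhi_lt_zero S hpos
      ((hb i).trans_lt (WithBot.coe_lt_coe.mpr (by linarith)))
  simp [hb0]

/-- `hdiv` is the consequence of Kouchnirenko's division theorem for the Jacobian ideal;
`hpos` encodes `N_γ K = 0` for `γ < 0`. -/
theorem classes_linearIndependent_general {n r : ℕ}
    (S : Finset ((Fin n → ℤ) →+ ℚ))
    (f : LaurentK n) (g : Fin r → LaurentK n)
    (hpos : ∀ a : Fin n → ℤ, ∃ L ∈ S, (0:ℚ) ≤ L a)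
    (hdiv : ∀ h ∈ jacobianIdeal f, ∀ β : ℚ, newtonPhi S h ≤ (β : WithBot ℚ) →
      ∃ b : Fin n → LaurentK n, h = ∑ i, b i * thetaDeriv i f ∧
        ∀ i, newtonPhi S (b i) ≤ ((β - 1 : ℚ) : WithBot ℚ))
    (hgind : LinearIndependent ℂ g)
    (hg : ∀ j, newtonPhi S (g j) < ((1 : ℚ) : WithBot ℚ)) :
    LinearIndependent ℂ
      (fun j : Fin r => Ideal.Quotient.mk (jacobianIdeal f) (g j)) := by
  have hdisj : Disjoint (span ℂ (Set.range g))
      (LinearMap.ker (Ideal.Quotient.mkₐ ℂ (jacobianIdeal f)).toLinearMap) :=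
    disjoint_def.mpr fun h hspan hker =>
      eq_zero_of_mem_jacobianIdeal_of_newtonPhi_lt_one S hpos hdiv
        (Ideal.Quotient.eq_zero_iff_mem.mp hker) (newtonPhi_lt_one_of_mem_span S hg hspan)
  exact hgind.map hdisj

/-- if the Laurent polynomials `g₁,…,g_r` are linearly independent in
`ℂ[u,u⁻¹]` and `φ(g_j) < 1` for all `j`, then their classes in
`ℂ[u,u⁻¹]/(∂_{u₁}f,…,∂_{uₙ}f)` are linearly independent.
(`hdiv` is the relevant consequence of Kouchnirenko's division theorem: an element of the
Jacobian ideal of weight `β` can be divided with quotients of weight `≤ β − 1`;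
`hpos` encodes that `N_γ K = 0` for `γ < 0`.) -/
theorem classes_linearIndependent {n r : ℕ}
    (S : Finset ((Fin n → ℤ) →+ ℚ)) (hS : S.Nonempty)
    (f : LaurentK n) (g : Fin r → LaurentK n)
    (hSf : SCompatible S f) (hconv : Convenient f) (hnd : Nondegenerate f)
    (hpos : ∀ a : Fin n → ℤ, ∃ L ∈ S, (0:ℚ) ≤ L a)
    (hdiv : ∀ h ∈ jacobianIdeal f, ∀ β : ℚ, newtonPhi S h ≤ (β : WithBot ℚ) →
      ∃ b : Fin n → LaurentK n, h = ∑ i, b i * thetaDeriv i f ∧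
        ∀ i, newtonPhi S (b i) ≤ ((β - 1 : ℚ) : WithBot ℚ))
    (hgind : LinearIndependent ℂ g)
    (hg : ∀ j, newtonPhi S (g j) < ((1 : ℚ) : WithBot ℚ)) :
    LinearIndependent ℂ
      (fun j : Fin r => Ideal.Quotient.mk (jacobianIdeal f) (g j)) :=
  classes_linearIndependent_general S f g hpos hdiv hgind hg

end
end

section
/- For F(u₁,u₂,x₁,x₂) = u₁⁵ + u₂⁵ + x₁u₁ + x₂u₂ and 0 ≤ i,j ≤ 2, let ε_{i,j} be the class of u₁^i u₂^j du₁∧du₂ in the Brieskorn lattice; then θ²∇_{∂θ} ε_{i,j} = (4/5)x₁ε_{i+1,j} + (4/5)x₂ε_{i,j+1} + ((i+j+2)/5)θ ε_{i,j}. -/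
open scoped BigOperators

noncomputable section

open MvPolynomial

/-- Variables: `u₁ = X 0`, `u₂ = X 1`, `x₁ = X 2`, `x₂ = X 3` in `ℂ[u₁,u₂,x₁,x₂]`. -/
abbrev R4 := MvPolynomial (Fin 4) ℂ

/-- `F(u₁,u₂,x₁,x₂) = u₁⁵ + u₂⁵ + x₁u₁ + x₂u₂`. -/
def Fdef : R4 := X 0 ^ 5 + X 1 ^ 5 + X 2 * X 0 + X 3 * X 1

/-- for `F = u₁⁵+u₂⁵+x₁u₁+x₂u₂` and `0 ≤ i,j ≤ 2` one has the exact-form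
identity behind `θ²∇_{∂θ} ε_{i,j} = (4/5)x₁ε_{i+1,j} + (4/5)x₂ε_{i,j+1} + ((i+j+2)/5)θε_{i,j}`:
with `ω = −(1/5)u₁^i u₂^{j+1} du₁ + (1/5)u₁^{i+1}u₂^j du₂` one has
`F·u₁^iu₂^j du₁∧du₂ = (4/5)x₁u₁^{i+1}u₂^j du₁∧du₂ + (4/5)x₂u₁^iu₂^{j+1} du₁∧du₂ + dF∧ω`
(first identity, coefficients of `du₁∧du₂`), while the `θ`-exact correction `d_uω` has
coefficient `((i+j+2)/5)u₁^iu₂^j` (second identity). -/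
theorem quintic_brieskorn_identity (i j : ℕ) (hi : i ≤ 2) (hj : j ≤ 2) :
    (Fdef * (X 0 ^ i * X 1 ^ j) =
      C (4/5 : ℂ) * X 2 * (X 0 ^ (i+1) * X 1 ^ j) +
      C (4/5 : ℂ) * X 3 * (X 0 ^ i * X 1 ^ (j+1)) +
      (pderiv 0 Fdef) * (C (1/5 : ℂ) * (X 0 ^ (i+1) * X 1 ^ j)) +
      (pderiv 1 Fdef) * (C (1/5 : ℂ) * (X 0 ^ i * X 1 ^ (j+1)))) ∧
    (pderiv 0 (C (1/5 : ℂ) * (X 0 ^ (i+1) * X 1 ^ j)) +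
      pderiv 1 (C (1/5 : ℂ) * (X 0 ^ i * X 1 ^ (j+1))) =
      C (((i : ℂ) + (j : ℂ) + 2)/5) * (X 0 ^ i * X 1 ^ j)) := by
  constructor
  · have h1 : (C (4/5 : ℂ) : R4) + C (1/5) = 1 := by rw [← C_add, ← C_1]; norm_num
    have h2 : (C (1/5 : ℂ) : R4) * 5 = 1 := by
      rw [show ((5:R4)) = C (5:ℂ) from (map_ofNat C 5).symm, ← C_mul, ← C_1]; norm_num
    simp only [Fdef, map_add, pderiv_X_self, pderiv_pow, pderiv_mul, pderiv_X,
        Pi.single_eq_same, Pi.single_eq_of_ne (by decide : (1:Fin 4) ≠ 0),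
        Pi.single_eq_of_ne (by decide : (2:Fin 4) ≠ 0),
        Pi.single_eq_of_ne (by decide : (3:Fin 4) ≠ 0),
        Pi.single_eq_of_ne (by decide : (0:Fin 4) ≠ 1),
        Pi.single_eq_of_ne (by decide : (2:Fin 4) ≠ 1),
        Pi.single_eq_of_ne (by decide : (3:Fin 4) ≠ 1)]
    linear_combination (-(X 0 ^ (i+1) * X 1 ^ j * X 2) - X 0 ^ i * X 1 ^ (j+1) * X 3) * h1 +
      (-(X 0 ^ (5+i) * X 1 ^ j) - X 0 ^ i * X 1 ^ (5+j)) * h2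
  · simp only [pderiv_mul, pderiv_C, pderiv_pow, pderiv_X,
        Pi.single_apply, if_true, if_neg (by decide : ¬(1:Fin 4)=(0:Fin 4)),
        if_neg (by decide : ¬(0:Fin 4)=(1:Fin 4)), mul_zero, zero_mul, mul_one,
        Nat.add_sub_cancel, add_zero, zero_add]
    simp only [one_div, div_eq_mul_inv, map_mul, map_add, map_natCast, map_one, map_ofNat,
      mul_zero, zero_mul, add_zero, zero_add]
    push_cast
    ring

end
end
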